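/- Suppose there exists p ∈ (0,1] such that A_p μ_p < 1. Then the ARCH(∞) equations have a unique causal strictly stationary solution (X_n) satisfying E[|X_n|^{2p}] < ∞; namely, any causal strictly stationary solution (X_n, σ_n) with E[|X_0|^{2p}] < ∞ satisfies σ_n² = S_n almost surely for every n, where S_n = a_0 + a_0 Σ_{k=1}^∞ Σ_{j_1,…,j_k ≥ 1} a_{j_1}⋯a_{j_k} z_{n−j_1}² ⋯ z_{n−j_1−⋯−j_k}². -/

import Mathlib

open MeasureTheory ProbabilityTheory Filter ENNReal

noncomputable section

variable {Ω : Type*}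

/-- `(z k)_{k ∈ ℤ}` is an i.i.d. sequence of real random variables. -/
def IsIIDSeq [MeasurableSpace Ω] (P : Measure Ω) (z : ℤ → Ω → ℝ) : Prop :=
  (∀ k, Measurable (z k)) ∧ iIndepFun z P ∧
    ∀ k, P.map (z k) = P.map (z 0)

/-- The σ-algebra generated by `(z k : k ≤ n)`. -/
def pastFiltration [MeasurableSpace Ω] (z : ℤ → Ω → ℝ) (n : ℤ) : MeasurableSpace Ω :=
  ⨆ k ∈ Set.Iic n, MeasurableSpace.comap (z k) inferInstance

/-- A solution is causal if `σ n` is measurable w.r.t. the σ-algebra generated by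
`(z k : k ≤ n - 1)`. -/
def IsCausal [MeasurableSpace Ω] (z σ' : ℤ → Ω → ℝ) : Prop :=
  ∀ n : ℤ, Measurable[pastFiltration z (n - 1)] (σ' n)

/-- Strict stationarity: the law of the shifted sequence does not depend on the shift. -/
def IsStrictlyStationary [MeasurableSpace Ω] (P : Measure Ω) (X : ℤ → Ω → ℝ) : Prop :=
  ∀ n : ℤ, P.map (fun ω (k : ℤ) => X (n + k) ω) = P.map (fun ω (k : ℤ) => X k ω)

/-- `A_p = Σ_{j ≥ 1} a_j ^ p`, computed in `[0,∞]`. -/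
def Acoef (a : ℕ → ℝ) (p : ℝ) : ℝ≥0∞ :=
  ∑' j : ℕ+, ENNReal.ofReal ((a j) ^ p)

/-- `μ_p = E[|z_0|^{2p}]`, computed in `[0,∞]`. -/
def muMom [MeasurableSpace Ω] (P : Measure Ω) (z0 : Ω → ℝ) (p : ℝ) : ℝ≥0∞ :=
  ∫⁻ ω, ENNReal.ofReal (|z0 ω| ^ (2 * p)) ∂P

/-- The Volterra chaos expansion
`S_n = a_0 + a_0 Σ_{k=1}^∞ Σ_{j_1,…,j_k ≥ 1} a_{j_1}⋯a_{j_k} z_{n−j_1}² ⋯ z_{n−j_1−⋯−j_k}²`,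
with values in `[0,∞]`. -/
def chaosS [MeasurableSpace Ω] (a : ℕ → ℝ) (z : ℤ → Ω → ℝ) (n : ℤ) (ω : Ω) : ℝ≥0∞ :=
  ENNReal.ofReal (a 0) + ENNReal.ofReal (a 0) *
    ∑' (k : ℕ) (j : Fin (k + 1) → ℕ+),
      ∏ i : Fin (k + 1),
        ENNReal.ofReal (a (j i)) *
          ENNReal.ofReal ((z (n - ∑ l ∈ Finset.Iic i, (j l : ℤ)) ω) ^ 2)

/-- `(X, σ)` solves the ARCH(∞) equations `X_n = σ_n z_n`,
`σ_n² = a_0 + Σ_{j≥1} a_j X_{n-j}²` (a.s., the series being a sum of nonnegative terms,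
computed in `[0,∞]`), with `σ_n ≥ 0`. -/
def SolvesARCH [MeasurableSpace Ω] (P : Measure Ω) (a : ℕ → ℝ) (z X σ' : ℤ → Ω → ℝ) : Prop :=
  (∀ n ω, 0 ≤ σ' n ω) ∧
  (∀ n : ℤ, ∀ᵐ ω ∂P, X n ω = σ' n ω * z n ω) ∧
  (∀ n : ℤ, ∀ᵐ ω ∂P, ENNReal.ofReal ((σ' n ω) ^ 2)
      = ENNReal.ofReal (a 0)
        + ∑' j : ℕ+, ENNReal.ofReal (a j) * ENNReal.ofReal ((X (n - j) ω) ^ 2))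

def archD (a : ℕ → ℝ) (z : ℤ → Ω → ℝ) (k : ℕ) (n : ℤ) (ω : Ω) : ℝ≥0∞ :=
  ∑' j : Fin (k + 1) → ℕ+, ∏ i : Fin (k + 1),
    ENNReal.ofReal (a (j i)) * ENNReal.ofReal ((z (n - ∑ l ∈ Finset.Iic i, (j l : ℤ)) ω) ^ 2)

lemma Iic_eq_filter {m : ℕ} (j : Fin m) : Finset.Iic j = Finset.univ.filter (· ≤ j) := by
  ext l; simp

lemma sum_Iic_succ_aux {M : Type*} [AddCommMonoid M] {k : ℕ} (i : Fin (k + 1))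
    (h : Fin (k + 2) → M) :
    ∑ l ∈ Finset.Iic i.succ, h l = h 0 + ∑ l ∈ Finset.Iic i, h l.succ := by
  rw [Iic_eq_filter, Iic_eq_filter, Finset.sum_filter, Finset.sum_filter, Fin.sum_univ_succ]
  simp [Fin.succ_le_succ_iff, Fin.zero_le]

lemma Iic_zero_fin {m : ℕ} : Finset.Iic (0 : Fin (m + 1)) = {0} := by
  ext l; simp [Fin.le_zero_iff]

lemma archD_zero (a : ℕ → ℝ) (z : ℤ → Ω → ℝ) (n : ℤ) (ω : Ω) :
    archD a z 0 n ω
      = ∑' j : ℕ+, ENNReal.ofReal (a j) * ENNReal.ofReal ((z (n - (j : ℤ)) ω) ^ 2) := by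
  rw [archD, ← (Equiv.funUnique (Fin 1) ℕ+).symm.tsum_eq]
  refine tsum_congr fun j0 => ?_
  rw [Fin.prod_univ_one, Iic_zero_fin, Finset.sum_singleton]
  rfl

lemma archD_succ (a : ℕ → ℝ) (z : ℤ → Ω → ℝ) (k : ℕ) (n : ℤ) (ω : Ω) :
    archD a z (k + 1) n ω
      = ∑' j : ℕ+, ENNReal.ofReal (a j) * ENNReal.ofReal ((z (n - (j : ℤ)) ω) ^ 2)
          * archD a z k (n - (j : ℤ)) ω := by
  rw [archD, ← (Fin.consEquiv (fun _ : Fin (k + 2) => ℕ+)).tsum_eq, ENNReal.tsum_prod']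
  refine tsum_congr fun j0 => ?_
  rw [archD, mul_comm (ENNReal.ofReal (a j0) * _), ← ENNReal.tsum_mul_right]
  refine tsum_congr fun jv => ?_
  show (∏ i : Fin (k + 2), ENNReal.ofReal (a ((Fin.cons j0 jv : ∀ _ : Fin (k+2), ℕ+) i)) *
      ENNReal.ofReal ((z (n - ∑ l ∈ Finset.Iic i, ((Fin.cons j0 jv : ∀ _ : Fin (k+2), ℕ+) l : ℤ)) ω) ^ 2)) = _
  rw [Fin.prod_univ_succ]
  rw [mul_comm]
  congr 1
  · refine Finset.prod_congr rfl fun i _ => ?_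
    rw [Fin.cons_succ, sum_Iic_succ_aux i (fun l => ((Fin.cons j0 jv : ∀ _ : Fin (k+2), ℕ+) l : ℤ))]
    simp only [Fin.cons_zero, Fin.cons_succ]
    rw [← sub_sub]

lemma tsum_rpow_le' {ι : Type*} (f : ι → ℝ≥0∞) {p : ℝ} (hp0 : 0 < p) (hp1 : p ≤ 1) :
    (∑' i, f i) ^ p ≤ ∑' i, f i ^ p := by
  classical
  have key : ∀ s : Finset ι, (∑ i ∈ s, f i) ^ p ≤ ∑ i ∈ s, f i ^ p := by
    intro s
    induction s using Finset.induction with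
    | empty => simp [ENNReal.zero_rpow_of_pos hp0]
    | insert x s hx ih =>
        rw [Finset.sum_insert hx, Finset.sum_insert hx]
        exact le_trans (ENNReal.rpow_add_le_add_rpow _ _ hp0.le hp1) (add_le_add le_rfl ih)
  rw [ENNReal.tsum_eq_iSup_sum, ← ENNReal.le_rpow_inv_iff hp0]
  exact iSup_le fun s => (ENNReal.le_rpow_inv_iff hp0).2
    (le_trans (key s) (ENNReal.sum_le_tsum s))

def archR (a : ℕ → ℝ) (z σ' : ℤ → Ω → ℝ) : ℕ → ℤ → Ω → ℝ≥0∞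
  | 0, n, ω => ENNReal.ofReal ((σ' n ω) ^ 2)
  | (K + 1), n, ω => ∑' j : ℕ+,
      ENNReal.ofReal (a j) * ENNReal.ofReal ((z (n - (j : ℤ)) ω) ^ 2)
        * archR a z σ' K (n - (j : ℤ)) ω

lemma pastFiltration_mono [MeasurableSpace Ω] (z : ℤ → Ω → ℝ) {s t : ℤ} (h : s ≤ t) :
    pastFiltration z s ≤ pastFiltration z t := by
  refine iSup₂_le fun k hk => ?_
  exact le_iSup₂ (f := fun (k : ℤ) (_ : k ∈ Set.Iic t) => MeasurableSpace.comap (z k) inferInstance)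
    k (le_trans hk h)

lemma comap_le_pastFiltration [MeasurableSpace Ω] (z : ℤ → Ω → ℝ) {k t : ℤ} (h : k ≤ t) :
    MeasurableSpace.comap (z k) inferInstance ≤ pastFiltration z t :=
  le_iSup₂ (f := fun (k : ℤ) (_ : k ∈ Set.Iic t) => MeasurableSpace.comap (z k) inferInstance) k h

lemma pastFiltration_le [MeasurableSpace Ω] (z : ℤ → Ω → ℝ) (hz : ∀ k, Measurable (z k)) (t : ℤ) :
    pastFiltration z t ≤ ‹MeasurableSpace Ω› :=
  iSup₂_le fun k _ => measurable_iff_comap_le.1 (hz k)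

lemma archR_measurable [MeasurableSpace Ω] (a : ℕ → ℝ) (z σ' : ℤ → Ω → ℝ)
    (hσ : IsCausal z σ') : ∀ (K : ℕ) (n : ℤ),
    Measurable[pastFiltration z (n - 1)] (archR a z σ' K n) := by
  intro K
  induction K with
  | zero =>
      intro n
      exact ((hσ n).pow_const 2).ennreal_ofReal
  | succ K ih =>
      intro n
      refine Measurable.ennreal_tsum fun j => ?_
      have hj1 : (1 : ℤ) ≤ (j : ℤ) := by exact_mod_cast j.one_le
      have hzj : Measurable[pastFiltration z (n - 1)] (z (n - (j : ℤ))) :=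
        Measurable.of_comap_le (comap_le_pastFiltration z (by omega))
      have hR : Measurable[pastFiltration z (n - 1)] (archR a z σ' K (n - (j : ℤ))) :=
        (ih (n - (j : ℤ))).mono (pastFiltration_mono z (by omega)) le_rfl
      exact (measurable_const.mul ((hzj.pow_const 2).ennreal_ofReal)).mul hR


lemma indep_past [MeasurableSpace Ω] (P : Measure Ω) [IsProbabilityMeasure P]
    (z : ℤ → Ω → ℝ) (hz : IsIIDSeq P z) (m : ℤ) :
    Indep (pastFiltration z (m - 1)) (MeasurableSpace.comap (z m) inferInstance) P := by
  have h := indep_iSup_of_disjoint (m := fun k : ℤ => MeasurableSpace.comap (z k) inferInstance)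
    (fun k => measurable_iff_comap_le.1 (hz.1 k)) hz.2.1.iIndep
    (S := Set.Iic (m - 1)) (T := {m}) (by simp)
  simpa [pastFiltration] using h

lemma lintegral_comp_z_eq [MeasurableSpace Ω] (P : Measure Ω) (z : ℤ → Ω → ℝ)
    (hz : IsIIDSeq P z) {g : ℝ → ℝ≥0∞} (hg : Measurable g) (m : ℤ) :
    ∫⁻ ω, g (z m ω) ∂P = ∫⁻ ω, g (z 0 ω) ∂P := by
  rw [← lintegral_map hg (hz.1 m), hz.2.2 m, lintegral_map hg (hz.1 0)]

lemma ofReal_sq_rpow {p : ℝ} (hp : 0 ≤ p) (x : ℝ) :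
    (ENNReal.ofReal (x ^ 2)) ^ p = ENNReal.ofReal (|x| ^ (2 * p)) := by
  rw [Real.rpow_mul (abs_nonneg x) 2 p,
    ← ENNReal.ofReal_rpow_of_nonneg (Real.rpow_nonneg (abs_nonneg x) _) hp]
  have h1 : |x| ^ (2 : ℝ) = x ^ 2 := by
    rw [show (2 : ℝ) = ((2 : ℕ) : ℝ) by norm_num, Real.rpow_natCast, sq_abs]
  rw [h1]

open Topology in
/-- Theorem 1 (uniqueness part): if `A_p μ_p < 1` for some `p ∈ (0,1]`, then any causal strictly
stationary solution `(X, σ)` of the ARCH(∞) equations with `E[|X_0|^{2p}] < ∞` satisfies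
`σ_n² = S_n` a.s. for every `n`; in particular such a solution is unique. -/
theorem arch_infty_uniqueness [MeasurableSpace Ω] (P : Measure Ω) [IsProbabilityMeasure P]
    (z : ℤ → Ω → ℝ) (hz : IsIIDSeq P z)
    (a : ℕ → ℝ) (ha0 : 0 < a 0) (ha : ∀ j : ℕ+, 0 ≤ a j)
    (p : ℝ) (hp0 : 0 < p) (hp1 : p ≤ 1)
    (hcontr : Acoef a p * muMom P (z 0) p < 1)
    (X σ' : ℤ → Ω → ℝ) (hsol : SolvesARCH P a z X σ')
    (hcausal : IsCausal z σ') (hstat : IsStrictlyStationary P X)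
    (hmom : (∫⁻ ω, ENNReal.ofReal (|X 0 ω| ^ (2 * p)) ∂P) < ⊤) :
    ∀ n : ℤ, ∀ᵐ ω ∂P, ENNReal.ofReal ((σ' n ω) ^ 2) = chaosS a z n ω := by
  obtain ⟨hzmeas, hzindep, hzid⟩ := hz
  obtain ⟨hσpos, hXeq, hARCH⟩ := hsol
  have hle : ∀ t, pastFiltration z t ≤ ‹MeasurableSpace Ω› := pastFiltration_le z hzmeas
  have hσmeas : ∀ m, Measurable (σ' m) := fun m => (hcausal m).mono (hle _) le_rfl
  have hchaos : ∀ (n : ℤ) (ω : Ω), chaosS a z n ω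
      = ENNReal.ofReal (a 0) + ENNReal.ofReal (a 0) * ∑' k, archD a z k n ω := fun n ω => rfl
  -- the base a.s. equation
  have hbase : ∀ n : ℤ, ∀ᵐ ω ∂P, ENNReal.ofReal ((σ' n ω) ^ 2)
      = ENNReal.ofReal (a 0) + archR a z σ' 1 n ω := by
    intro n
    filter_upwards [hARCH n, ae_all_iff.2 fun j : ℕ+ => hXeq (n - (j : ℤ))] with ω h1 h2
    rw [h1]
    congr 1
    show _ = ∑' j : ℕ+, ENNReal.ofReal (a j) * ENNReal.ofReal ((z (n - (j : ℤ)) ω) ^ 2)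
        * archR a z σ' 0 (n - (j : ℤ)) ω
    refine tsum_congr fun j => ?_
    show ENNReal.ofReal (a j) * ENNReal.ofReal ((X (n - (j : ℤ)) ω) ^ 2) = _
    rw [h2 j, mul_pow, ENNReal.ofReal_mul (sq_nonneg _)]
    show _ = ENNReal.ofReal (a j) * ENNReal.ofReal ((z (n - (j : ℤ)) ω) ^ 2)
        * ENNReal.ofReal ((σ' (n - (j : ℤ)) ω) ^ 2)
    ring
  -- the iterated identity
  have hID : ∀ (K : ℕ) (n : ℤ), ∀ᵐ ω ∂P, ENNReal.ofReal ((σ' n ω) ^ 2)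
      = ENNReal.ofReal (a 0) + ENNReal.ofReal (a 0) * ∑ k ∈ Finset.range K, archD a z k n ω
        + archR a z σ' (K + 1) n ω := by
    intro K
    induction K with
    | zero => intro n; filter_upwards [hbase n] with ω h; simpa using h
    | succ K ih =>
        intro n
        filter_upwards [hbase n, ae_all_iff.2 fun j : ℕ+ => ih (n - (j : ℤ))] with ω h1 h2
        rw [h1]
        have expand : archR a z σ' 1 n ω
            = ENNReal.ofReal (a 0) * archD a z 0 n ω
              + ENNReal.ofReal (a 0) * ∑ k ∈ Finset.range K, archD a z (k + 1) n ω
              + archR a z σ' (K + 2) n ω := by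
          show (∑' j : ℕ+, ENNReal.ofReal (a j) * ENNReal.ofReal ((z (n - (j : ℤ)) ω) ^ 2)
              * archR a z σ' 0 (n - (j : ℤ)) ω) = _
          have hterm : ∀ j : ℕ+, ENNReal.ofReal (a j) * ENNReal.ofReal ((z (n - (j : ℤ)) ω) ^ 2)
              * archR a z σ' 0 (n - (j : ℤ)) ω
              = (ENNReal.ofReal (a j) * ENNReal.ofReal ((z (n - (j : ℤ)) ω) ^ 2))
                  * ENNReal.ofReal (a 0)
                + (∑ k ∈ Finset.range K, ENNReal.ofReal (a 0)
                    * (ENNReal.ofReal (a j) * ENNReal.ofReal ((z (n - (j : ℤ)) ω) ^ 2)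
                        * archD a z k (n - (j : ℤ)) ω))
                + ENNReal.ofReal (a j) * ENNReal.ofReal ((z (n - (j : ℤ)) ω) ^ 2)
                    * archR a z σ' (K + 1) (n - (j : ℤ)) ω := by
            intro j
            show ENNReal.ofReal (a j) * ENNReal.ofReal ((z (n - (j : ℤ)) ω) ^ 2)
                * ENNReal.ofReal ((σ' (n - (j : ℤ)) ω) ^ 2) = _
            rw [h2 j]
            have hmid : ∑ k ∈ Finset.range K, ENNReal.ofReal (a 0)
                * (ENNReal.ofReal (a (j : ℕ)) * ENNReal.ofReal ((z (n - (j : ℤ)) ω) ^ 2)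
                    * archD a z k (n - (j : ℤ)) ω)
                = (ENNReal.ofReal (a (j : ℕ)) * ENNReal.ofReal ((z (n - (j : ℤ)) ω) ^ 2))
                    * (ENNReal.ofReal (a 0)
                        * ∑ k ∈ Finset.range K, archD a z k (n - (j : ℤ)) ω) := by
              rw [Finset.mul_sum, Finset.mul_sum]
              exact Finset.sum_congr rfl fun k _ => by ring
            rw [hmid]
            ring
          calc (∑' j : ℕ+, ENNReal.ofReal (a j) * ENNReal.ofReal ((z (n - (j : ℤ)) ω) ^ 2)
              * archR a z σ' 0 (n - (j : ℤ)) ω)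
              = ∑' j : ℕ+, ((ENNReal.ofReal (a j) * ENNReal.ofReal ((z (n - (j : ℤ)) ω) ^ 2))
                  * ENNReal.ofReal (a 0)
                + (∑ k ∈ Finset.range K, ENNReal.ofReal (a 0)
                    * (ENNReal.ofReal (a j) * ENNReal.ofReal ((z (n - (j : ℤ)) ω) ^ 2)
                        * archD a z k (n - (j : ℤ)) ω))
                + ENNReal.ofReal (a j) * ENNReal.ofReal ((z (n - (j : ℤ)) ω) ^ 2)
                    * archR a z σ' (K + 1) (n - (j : ℤ)) ω) := tsum_congr hterm
            _ = _ := by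
                rw [ENNReal.tsum_add, ENNReal.tsum_add]
                congr 1
                · congr 1
                  · rw [ENNReal.tsum_mul_right, mul_comm, archD_zero]
                  · rw [Summable.tsum_finsetSum (fun k _ => ENNReal.summable), Finset.mul_sum]
                    refine Finset.sum_congr rfl fun k _ => ?_
                    rw [ENNReal.tsum_mul_left, archD_succ]
        rw [expand, Finset.sum_range_succ', mul_add]
        ring
  -- degenerate cases
  by_cases hdeg : (∀ j : ℕ+, a (j : ℕ) = 0) ∨ muMom P (z 0) p = 0
  · intro n
    rcases hdeg with hA | hmu
    · have hch : ∀ ω, chaosS a z n ω = ENNReal.ofReal (a 0) := by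
        intro ω
        rw [hchaos]
        have hD : ∀ k, archD a z k n ω = 0 := by
          intro k
          rw [archD]
          convert tsum_zero with j
          refine Finset.prod_eq_zero (Finset.mem_univ 0) ?_
          rw [hA (j 0)]
          simp
        simp [hD]
      filter_upwards [hARCH n] with ω h1
      rw [hch ω, h1]
      have : ∀ j : ℕ+, ENNReal.ofReal (a (j : ℕ)) * ENNReal.ofReal ((X (n - (j : ℤ)) ω) ^ 2) = 0 := by
        intro j; rw [hA j]; simp
      simp [this]
    · -- all z are a.e. zero
      have hz0 : ∀ m : ℤ, ∀ᵐ ω ∂P, z m ω = 0 := by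
        intro m
        have hg : Measurable fun x : ℝ => ENNReal.ofReal (|x| ^ (2 * p)) :=
          ((measurable_id.abs).pow measurable_const).ennreal_ofReal
        have h0 : ∫⁻ ω, ENNReal.ofReal (|z m ω| ^ (2 * p)) ∂P = 0 := by
          rw [lintegral_comp_z_eq P z ⟨hzmeas, hzindep, hzid⟩ hg m]; exact hmu
        have h1 := (lintegral_eq_zero_iff (hg.comp (hzmeas m))).1 h0
        filter_upwards [h1] with ω hω
        simp only [Function.comp_apply, Pi.zero_apply, ENNReal.ofReal_eq_zero] at hω
        have h2 : |z m ω| ^ (2 * p) = 0 :=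
          le_antisymm hω (Real.rpow_nonneg (abs_nonneg _) _)
        have h3 := (Real.rpow_eq_zero_iff_of_nonneg (abs_nonneg _)).1 h2
        exact abs_eq_zero.1 h3.1
      filter_upwards [hARCH n, ae_all_iff.2 fun j : ℕ+ => hXeq (n - (j : ℤ)),
        ae_all_iff.2 hz0] with ω h1 h2 h3
      have hch : chaosS a z n ω = ENNReal.ofReal (a 0) := by
        rw [hchaos]
        have hD : ∀ k, archD a z k n ω = 0 := by
          intro k
          rw [archD]
          convert tsum_zero with j
          refine Finset.prod_eq_zero (Finset.mem_univ 0) ?_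
          rw [h3]
          simp
        simp [hD]
      rw [hch, h1]
      have : ∀ j : ℕ+, ENNReal.ofReal (a (j : ℕ)) * ENNReal.ofReal ((X (n - (j : ℤ)) ω) ^ 2) = 0 := by
        intro j
        rw [h2 j, h3]
        simp
      simp [this]
  -- main case
  push_neg at hdeg
  obtain ⟨hAex, hmu0⟩ := hdeg
  have hrpE : Measurable fun x : ℝ≥0∞ => x ^ p := measurable_id.pow measurable_const
  have hAp_pos : 0 < Acoef a p := by
    obtain ⟨j0, hj0⟩ := hAex
    have haj : 0 < a (j0 : ℕ) := (ha j0).lt_of_ne (Ne.symm hj0)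
    calc (0 : ℝ≥0∞) < ENNReal.ofReal ((a (j0 : ℕ)) ^ p) := by
          rw [ENNReal.ofReal_pos]; exact Real.rpow_pos_of_pos haj p
      _ ≤ Acoef a p := ENNReal.le_tsum j0
  have hμ_top : muMom P (z 0) p ≠ ⊤ := by
    intro h
    rw [h, ENNReal.mul_top hAp_pos.ne'] at hcontr
    simp at hcontr
  have hA_top : Acoef a p ≠ ⊤ := by
    intro h
    rw [h, ENNReal.top_mul hmu0] at hcontr
    simp at hcontr
  -- stationarity: all moments of X m equal that of X 0
  have hXmeas' : ∀ m : ℤ, Measurable fun ω => σ' m ω * z m ω :=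
    fun m => (hσmeas m).mul (hzmeas m)
  have hgseq : Measurable fun y : ℤ → ℝ => ENNReal.ofReal (|y 0| ^ (2 * p)) :=
    (((measurable_pi_apply (0 : ℤ)).abs).pow measurable_const).ennreal_ofReal
  have hFm : ∀ m : ℤ, AEMeasurable (fun ω (k : ℤ) => X (m + k) ω) P := by
    intro m
    refine ⟨fun ω k => σ' (m + k) ω * z (m + k) ω,
      measurable_pi_lambda _ fun k => hXmeas' _, ?_⟩
    filter_upwards [ae_all_iff.2 fun k : ℤ => hXeq (m + k)] with ω hω
    funext k; exact hω k
  have hF0 : AEMeasurable (fun ω (k : ℤ) => X k ω) P := by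
    refine ⟨fun ω k => σ' k ω * z k ω, measurable_pi_lambda _ fun k => hXmeas' _, ?_⟩
    filter_upwards [ae_all_iff.2 fun k : ℤ => hXeq k] with ω hω
    funext k; exact hω k
  have hcm : ∀ m : ℤ, ∫⁻ ω, ENNReal.ofReal (|X m ω| ^ (2 * p)) ∂P
      = ∫⁻ ω, ENNReal.ofReal (|X 0 ω| ^ (2 * p)) ∂P := by
    intro m
    calc ∫⁻ ω, ENNReal.ofReal (|X m ω| ^ (2 * p)) ∂P
        = ∫⁻ ω, (fun y : ℤ → ℝ => ENNReal.ofReal (|y 0| ^ (2 * p)))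
            ((fun ω (k : ℤ) => X (m + k) ω) ω) ∂P := by
          refine lintegral_congr fun ω => ?_
          simp
      _ = ∫⁻ y, ENNReal.ofReal (|y 0| ^ (2 * p)) ∂(P.map (fun ω (k : ℤ) => X (m + k) ω)) :=
          (lintegral_map' hgseq.aemeasurable (hFm m)).symm
      _ = ∫⁻ y, ENNReal.ofReal (|y 0| ^ (2 * p)) ∂(P.map (fun ω (k : ℤ) => X k ω)) := by
          rw [hstat m]
      _ = ∫⁻ ω, ENNReal.ofReal (|X 0 ω| ^ (2 * p)) ∂P := lintegral_map' hgseq.aemeasurable hF0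
  -- moments of W
  have hWmeas : ∀ m : ℤ, Measurable fun ω => ENNReal.ofReal ((z m ω) ^ 2) :=
    fun m => ((hzmeas m).pow measurable_const).ennreal_ofReal
  have hWpM : ∀ m : ℤ, ∫⁻ ω, (ENNReal.ofReal ((z m ω) ^ 2)) ^ p ∂P = muMom P (z 0) p := by
    intro m
    have he : ∀ ω, (ENNReal.ofReal ((z m ω) ^ 2)) ^ p
        = (fun x : ℝ => ENNReal.ofReal (|x| ^ (2 * p))) (z m ω) := fun ω =>
      ofReal_sq_rpow hp0.le (z m ω)
    rw [lintegral_congr he]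
    exact lintegral_comp_z_eq P z ⟨hzmeas, hzindep, hzid⟩
      (((measurable_id.abs).pow measurable_const).ennreal_ofReal) m
  -- independence factorization
  have hfact : ∀ (m : ℤ) (f : Ω → ℝ≥0∞), Measurable[pastFiltration z (m - 1)] f →
      ∫⁻ ω, f ω * (ENNReal.ofReal ((z m ω) ^ 2)) ^ p ∂P
        = (∫⁻ ω, f ω ∂P) * muMom P (z 0) p := by
    intro m f hf
    have hWm : Measurable[MeasurableSpace.comap (z m) inferInstance]
        fun ω => (ENNReal.ofReal ((z m ω) ^ 2)) ^ p := by
      have hzm : Measurable[MeasurableSpace.comap (z m) inferInstance] (z m) :=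
        Measurable.of_comap_le le_rfl
      exact ((hzm.pow measurable_const).ennreal_ofReal).pow measurable_const
    rw [lintegral_mul_eq_lintegral_mul_lintegral_of_independent_measurableSpace
      (hle _) (measurable_iff_comap_le.1 (hzmeas m))
      (indep_past P z ⟨hzmeas, hzindep, hzid⟩ m) hf hWm, hWpM m]
  -- uniform moment for Y^p
  have hYpmeas : ∀ m : ℤ, Measurable[pastFiltration z (m - 1)]
      fun ω => (ENNReal.ofReal ((σ' m ω) ^ 2)) ^ p := fun m =>
    (((hcausal m).pow measurable_const).ennreal_ofReal).pow measurable_const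
  have hYpM : ∀ m : ℤ, (∫⁻ ω, (ENNReal.ofReal ((σ' m ω) ^ 2)) ^ p ∂P) * muMom P (z 0) p
      = ∫⁻ ω, ENNReal.ofReal (|X 0 ω| ^ (2 * p)) ∂P := by
    intro m
    rw [← hfact m _ (hYpmeas m)]
    have he : ∀ ω, (ENNReal.ofReal ((σ' m ω) ^ 2)) ^ p * (ENNReal.ofReal ((z m ω) ^ 2)) ^ p
        = ENNReal.ofReal (|σ' m ω * z m ω| ^ (2 * p)) := by
      intro ω
      rw [ofReal_sq_rpow hp0.le, ofReal_sq_rpow hp0.le,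
        ← ENNReal.ofReal_mul (Real.rpow_nonneg (abs_nonneg _) _),
        ← Real.mul_rpow (abs_nonneg _) (abs_nonneg _), ← abs_mul]
    rw [lintegral_congr he, ← hcm m]
    refine lintegral_congr_ae ?_
    filter_upwards [hXeq m] with ω hω
    rw [hω]
  set M : ℝ≥0∞ := (∫⁻ ω, ENNReal.ofReal (|X 0 ω| ^ (2 * p)) ∂P) * (muMom P (z 0) p)⁻¹ with hMdef
  have hM : ∀ m : ℤ, ∫⁻ ω, (ENNReal.ofReal ((σ' m ω) ^ 2)) ^ p ∂P = M := by
    intro m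
    rw [hMdef, ← hYpM m, mul_assoc, ENNReal.mul_inv_cancel hmu0 hμ_top, mul_one]
  have hMtop : M ≠ ⊤ :=
    ENNReal.mul_ne_top hmom.ne (ENNReal.inv_ne_top.2 hmu0)
  -- measurability of remainders
  have hRmeas : ∀ (K : ℕ) (n : ℤ), Measurable (archR a z σ' K n) := fun K n =>
    (archR_measurable a z σ' hcausal K n).mono (hle _) le_rfl
  -- the key moment bound
  have hbound : ∀ (K : ℕ) (n : ℤ), ∫⁻ ω, (archR a z σ' K n ω) ^ p ∂P
      ≤ (Acoef a p * muMom P (z 0) p) ^ K * M := by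
    intro K
    induction K with
    | zero => intro n; rw [pow_zero, one_mul]; exact (hM n).le
    | succ K ih =>
        intro n
        have step1 : ∀ ω, (archR a z σ' (K + 1) n ω) ^ p
            ≤ ∑' j : ℕ+, ENNReal.ofReal ((a (j : ℕ)) ^ p)
                * ((ENNReal.ofReal ((z (n - (j : ℤ)) ω) ^ 2)) ^ p
                    * (archR a z σ' K (n - (j : ℤ)) ω) ^ p) := by
          intro ω
          refine le_trans (tsum_rpow_le' _ hp0 hp1) (le_of_eq (tsum_congr fun j => ?_))
          rw [ENNReal.mul_rpow_of_nonneg _ _ hp0.le, ENNReal.mul_rpow_of_nonneg _ _ hp0.le,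
            ENNReal.ofReal_rpow_of_nonneg (ha j) hp0.le, mul_assoc]
        have hmeasj : ∀ j : ℕ+, Measurable fun ω =>
            (ENNReal.ofReal ((z (n - (j : ℤ)) ω) ^ 2)) ^ p
              * (archR a z σ' K (n - (j : ℤ)) ω) ^ p := fun j =>
          ((hWmeas _).pow measurable_const).mul ((hRmeas K _).pow measurable_const)
        calc ∫⁻ ω, (archR a z σ' (K + 1) n ω) ^ p ∂P
            ≤ ∫⁻ ω, ∑' j : ℕ+, ENNReal.ofReal ((a (j : ℕ)) ^ p)
                * ((ENNReal.ofReal ((z (n - (j : ℤ)) ω) ^ 2)) ^ p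
                    * (archR a z σ' K (n - (j : ℤ)) ω) ^ p) ∂P := lintegral_mono step1
          _ = ∑' j : ℕ+, ENNReal.ofReal ((a (j : ℕ)) ^ p)
                * ∫⁻ ω, (ENNReal.ofReal ((z (n - (j : ℤ)) ω) ^ 2)) ^ p
                    * (archR a z σ' K (n - (j : ℤ)) ω) ^ p ∂P := by
              rw [lintegral_tsum fun j => (((hmeasj j).const_mul _)).aemeasurable]
              exact tsum_congr fun j => lintegral_const_mul _ (hmeasj j)
          _ ≤ ∑' j : ℕ+, ENNReal.ofReal ((a (j : ℕ)) ^ p)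
                * (muMom P (z 0) p * ((Acoef a p * muMom P (z 0) p) ^ K * M)) := by
              refine ENNReal.tsum_le_tsum fun j => mul_le_mul_right ?_ _
              have hj1 : (1 : ℤ) ≤ (j : ℤ) := by exact_mod_cast j.one_le
              have hRj : Measurable[pastFiltration z (n - (j : ℤ) - 1)]
                  fun ω => (archR a z σ' K (n - (j : ℤ)) ω) ^ p :=
                (archR_measurable a z σ' hcausal K _).pow measurable_const
              calc ∫⁻ ω, (ENNReal.ofReal ((z (n - (j : ℤ)) ω) ^ 2)) ^ p
                    * (archR a z σ' K (n - (j : ℤ)) ω) ^ p ∂P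
                  = ∫⁻ ω, (archR a z σ' K (n - (j : ℤ)) ω) ^ p
                      * (ENNReal.ofReal ((z (n - (j : ℤ)) ω) ^ 2)) ^ p ∂P := by
                    refine lintegral_congr fun ω => mul_comm _ _
                _ = (∫⁻ ω, (archR a z σ' K (n - (j : ℤ)) ω) ^ p ∂P) * muMom P (z 0) p :=
                    hfact (n - (j : ℤ)) _ hRj
                _ ≤ ((Acoef a p * muMom P (z 0) p) ^ K * M) * muMom P (z 0) p :=
                    mul_le_mul_left (ih _) _
                _ = muMom P (z 0) p * ((Acoef a p * muMom P (z 0) p) ^ K * M) := by ring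
          _ = (Acoef a p * muMom P (z 0) p) ^ (K + 1) * M := by
              rw [ENNReal.tsum_mul_right]
              show Acoef a p * _ = _
              ring
  -- conclusion
  intro n
  have hsum_int : ∫⁻ ω, ∑' K : ℕ, (archR a z σ' K n ω) ^ p ∂P ≠ ⊤ := by
    rw [lintegral_tsum fun K => ((hRmeas K n).pow measurable_const).aemeasurable]
    refine ne_top_of_le_ne_top ?_ (ENNReal.tsum_le_tsum fun K => hbound K n)
    rw [ENNReal.tsum_mul_right, ENNReal.tsum_geometric]
    exact ENNReal.mul_ne_top (ENNReal.inv_ne_top.2 (tsub_pos_of_lt hcontr).ne') hMtop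
  have htend : ∀ᵐ ω ∂P, Tendsto (fun K => archR a z σ' K n ω) atTop (𝓝 0) := by
    filter_upwards [ae_lt_top (Measurable.ennreal_tsum fun K =>
      (hRmeas K n).pow measurable_const) hsum_int] with ω hω
    have h1 : Tendsto (fun K => (archR a z σ' K n ω) ^ p) atTop (𝓝 0) :=
      ENNReal.tendsto_atTop_zero_of_tsum_ne_top hω.ne
    have h3 : Tendsto (fun K => ((archR a z σ' K n ω) ^ p) ^ p⁻¹) atTop (𝓝 0) := by
      have := (ENNReal.continuous_rpow_const (y := p⁻¹)).tendsto 0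
      rw [ENNReal.zero_rpow_of_pos (by positivity)] at this
      exact this.comp h1
    refine h3.congr fun K => ?_
    rw [← ENNReal.rpow_mul, mul_inv_cancel₀ hp0.ne', ENNReal.rpow_one]
  filter_upwards [htend, ae_all_iff.2 fun K : ℕ => hID K n] with ω hR hid
  rw [hchaos]
  have hlim : Tendsto (fun K : ℕ => ENNReal.ofReal (a 0)
      + ENNReal.ofReal (a 0) * ∑ k ∈ Finset.range K, archD a z k n ω
      + archR a z σ' (K + 1) n ω) atTop
      (𝓝 (ENNReal.ofReal (a 0) + ENNReal.ofReal (a 0) * ∑' k, archD a z k n ω + 0)) := by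
    refine Tendsto.add (Tendsto.add tendsto_const_nhds ?_) ?_
    · exact ENNReal.Tendsto.const_mul (ENNReal.tendsto_nat_tsum _)
        (Or.inr ENNReal.ofReal_ne_top)
    · exact hR.comp (tendsto_add_atTop_nat 1)
  have hconst : Tendsto (fun K : ℕ => ENNReal.ofReal (a 0)
      + ENNReal.ofReal (a 0) * ∑ k ∈ Finset.range K, archD a z k n ω
      + archR a z σ' (K + 1) n ω) atTop (𝓝 (ENNReal.ofReal ((σ' n ω) ^ 2))) :=
    Tendsto.congr (fun K => (hid K)) tendsto_const_nhds
  have := tendsto_nhds_unique hconst hlim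
  rw [add_zero] at this
  exact this

end
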